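/- arXiv:1706.03935 — 7 statements merged into one kernel-verified Lean document; each statement's English description precedes it below -/
import Mathlib

section
/- For every n and d with d ≤ n, and t = C·d²·log n for a sufficiently large absolute constant C, there exists a d-disjunct t×n Boolean matrix. -/
/-
Fill a `t × n` matrix with entries drawn uniformly from `Fin (d + 1)` and read an entry `0` as a
`1`, so that each entry is `1` with probability `1 / (d + 1)`. For a column `i` and a `d`-set
`S ∌ i`, a row has a `1` at `i` and `0`s on `S` with probability `(1/(d+1)) (d/(d+1))^d`, which is
at least `1 / (4(d+1))`; so all `t` rows fail with probability at most `exp (-t / (4(d+1)))`,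
which is below `n^{-(d+1)}` once `t = 16 d² (log₂ n + 1)`. A union bound over the at most
`n^{d+1}` pairs `(i, S)` leaves a good matrix. All probabilities are phrased as counts.
-/

/-- A `t × n` Boolean matrix is `d`-disjunct if for every `d + 1` distinct
column indices `i, i₁, …, i_d` there is a row `j` with a `1` in column `i`
and `0` in columns `i₁, …, i_d`. -/
def Disjunct {t n : ℕ} (M : Fin t → Fin n → Bool) (d : ℕ) : Prop :=
  ∀ (i : Fin n) (S : Finset (Fin n)), S.card = d → i ∉ S →
    ∃ j : Fin t, M j i = true ∧ ∀ k ∈ S, M j k = false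

open Finset

theorem exists_forall_not_of_card_mul_lt {ι Ω : Type*} [Fintype Ω] (P : Finset ι)
    (Bad : ι → Ω → Prop) [∀ p, DecidablePred (Bad p)] (b : ℕ)
    (hBad : ∀ p ∈ P, #{ω | Bad p ω} ≤ b) (hlt : #P * b < Fintype.card Ω) :
    ∃ ω, ∀ p ∈ P, ¬Bad p ω := by
  classical
  by_contra! h
  have hcover : (univ : Finset Ω) ⊆ P.biUnion fun p ↦ {ω | Bad p ω} := fun ω _ ↦ by
    obtain ⟨p, hp, hω⟩ := h ω
    exact mem_biUnion.2 ⟨p, hp, by simpa using hω⟩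
  exact hlt.not_ge ((card_le_card hcover).trans (card_biUnion_le_card_mul _ _ _ hBad))

theorem card_filter_forall_fun {ι β : Type*} [Fintype ι] [DecidableEq ι] [Fintype β]
    (P : β → Prop) [DecidablePred P] [DecidablePred fun M : ι → β ↦ ∀ j, P (M j)] :
    #{M : ι → β | ∀ j, P (M j)} = #{x | P x} ^ Fintype.card ι := by
  have : ({M : ι → β | ∀ j, P (M j)} : Finset _) = Fintype.piFinset fun _ ↦ {x | P x} := by
    ext; simp
  rw [this, Fintype.card_piFinset, prod_const, card_univ]

def Isolates {ι α : Type*} (a : α) (i : ι) (S : Finset ι) (r : ι → α) : Prop :=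
  r i = a ∧ ∀ k ∈ S, r k ≠ a

instance {ι α : Type*} [DecidableEq α] (a : α) (i : ι) (S : Finset ι) :
    DecidablePred (Isolates a i S) :=
  fun _ ↦ inferInstanceAs (Decidable (_ ∧ _))

theorem card_filter_isolates {ι α : Type*} [Fintype ι] [DecidableEq ι] [Fintype α]
    [DecidableEq α] (a : α) {i : ι} {S : Finset ι} (hi : i ∉ S) :
    #{r : ι → α | Isolates a i S r} =
      (Fintype.card α - 1) ^ #S * Fintype.card α ^ (Fintype.card ι - #S - 1) := by
  let T (k : ι) : Finset α := if k = i then {a} else if k ∈ S then {a}ᶜ else univ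
  have hne {k} (hk : k ∈ S) : k ≠ i := fun h ↦ hi (h ▸ hk)
  have hT : ({r : ι → α | Isolates a i S r} : Finset _) = Fintype.piFinset T := by
    ext r
    rw [mem_filter, Fintype.mem_piFinset]
    simp only [mem_univ, true_and, Isolates, T]
    refine ⟨fun ⟨hri, hrS⟩ k ↦ ?_, fun h ↦ ⟨by simpa using h i, fun k hk ↦ ?_⟩⟩
    · split_ifs with hki hkS
      · simp [hki, hri]
      · simpa using hrS k hkS
      · exact mem_univ _
    · simpa [hne hk, hk] using h k
  have hTS : ∀ k ∈ S, #(T k) = Fintype.card α - 1 := fun k hk ↦ by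
    simp [T, hne hk, hk, card_compl]
  have hTc : ∀ k ∈ (insert i S)ᶜ, #(T k) = Fintype.card α := fun k hk ↦ by
    rw [mem_compl, mem_insert, not_or] at hk
    simp [T, hk.1, hk.2]
  rw [hT, Fintype.card_piFinset, ← prod_mul_prod_compl (insert i S), prod_insert hi,
    prod_congr rfl hTS, prod_congr rfl hTc, prod_const, prod_const, card_compl,
    card_insert_of_notMem hi, Nat.sub_sub]
  simp [T]

theorem succ_pow_le_four_mul_pow (d : ℕ) : (d + 1) ^ d ≤ 4 * d ^ d := by
  rcases d.eq_zero_or_pos with rfl | hd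
  · norm_num
  have hd' : (0 : ℝ) < d := by exact_mod_cast hd
  have : ((d : ℝ) + 1) ^ d ≤ 4 * (d : ℝ) ^ d := calc
    ((d : ℝ) + 1) ^ d = (1 + (d : ℝ)⁻¹) ^ d * (d : ℝ) ^ d := by
      rw [← mul_pow, add_mul, inv_mul_cancel₀ hd'.ne', one_mul, add_comm]
    _ ≤ Real.exp 1 * (d : ℝ) ^ d := by gcongr; exact Real.one_add_inv_pow_le_exp
    _ ≤ 4 * (d : ℝ) ^ d := by gcongr; linarith [Real.exp_one_lt_d9]
  exact_mod_cast this

theorem succ_pow_le_mul_pow_mul_succ_pow (n d : ℕ) :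
    (d + 1) ^ n ≤ 4 * (d + 1) * (d ^ d * (d + 1) ^ (n - d - 1)) := calc
  (d + 1) ^ n ≤ (d + 1) ^ (d + 1 + (n - d - 1)) := Nat.pow_le_pow_right d.succ_pos (by omega)
  _ = (d + 1) * (d + 1) ^ d * (d + 1) ^ (n - d - 1) := by ring
  _ ≤ (d + 1) * (4 * d ^ d) * (d + 1) ^ (n - d - 1) := by
    gcongr; exact succ_pow_le_four_mul_pow d
  _ = 4 * (d + 1) * (d ^ d * (d + 1) ^ (n - d - 1)) := by ring

theorem pow_mul_succ_pow_le_succ_pow {n d : ℕ} (hdn : d ≤ n) :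
    d ^ d * (d + 1) ^ (n - d - 1) ≤ (d + 1) ^ n := calc
  d ^ d * (d + 1) ^ (n - d - 1) ≤ (d + 1) ^ d * (d + 1) ^ (n - d - 1) := by gcongr; omega
  _ = (d + 1) ^ (d + (n - d - 1)) := (pow_add _ _ _).symm
  _ ≤ (d + 1) ^ n := Nat.pow_le_pow_right d.succ_pos (by omega)

theorem mul_sub_pow_lt_pow {N A G m t : ℕ} (hA : 0 < A) (hGA : G ≤ A) (hAG : A ≤ m * G)
    (hN : (N : ℝ) < Real.exp (t / m)) : N * (A - G) ^ t < A ^ t := by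
  have hm : (0 : ℝ) < m := by
    have : 0 < m := Nat.pos_of_ne_zero fun h ↦ by simp [h] at hAG; omega
    exact_mod_cast this
  have hA' : (0 : ℝ) < A := by exact_mod_cast hA
  have hAG' : (A : ℝ) ≤ m * G := by exact_mod_cast hAG
  have hsub : ((A - G : ℕ) : ℝ) ≤ A * Real.exp (-(1 / m)) := calc
    ((A - G : ℕ) : ℝ) = A * (1 - G / A) := by push_cast [hGA]; field_simp
    _ ≤ A * (1 - 1 / m) := by
      gcongr A * (1 - ?_)
      rw [div_le_div_iff₀ hm hA']
      linarith
    _ ≤ A * Real.exp (-(1 / m)) := by gcongr; exact Real.one_sub_le_exp_neg _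
  have : (N : ℝ) * ((A - G : ℕ) : ℝ) ^ t < (A : ℝ) ^ t := calc
    (N : ℝ) * ((A - G : ℕ) : ℝ) ^ t ≤ N * ((A : ℝ) ^ t * Real.exp (-(t / m))) := by
      refine mul_le_mul_of_nonneg_left ?_ N.cast_nonneg
      calc ((A - G : ℕ) : ℝ) ^ t ≤ (A * Real.exp (-(1 / m))) ^ t := by gcongr
        _ = (A : ℝ) ^ t * Real.exp (-(t / m)) := by
          rw [mul_pow, ← Real.exp_nat_mul]; congr 2; ring
    _ < Real.exp (t / m) * ((A : ℝ) ^ t * Real.exp (-(t / m))) := by gcongr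
    _ = (A : ℝ) ^ t := by rw [mul_left_comm, ← Real.exp_add]; simp
  exact_mod_cast this

theorem natCast_lt_exp_log_two_add_one (n : ℕ) : (n : ℝ) < Real.exp (Nat.log 2 n + 1) := calc
  (n : ℝ) < 2 ^ (Nat.log 2 n + 1) := by exact_mod_cast Nat.lt_pow_succ_log_self one_lt_two n
  _ ≤ Real.exp 1 ^ (Nat.log 2 n + 1) := by gcongr; exact Real.exp_one_gt_two.le
  _ = Real.exp (Nat.log 2 n + 1) := by rw [← Real.exp_nat_mul]; push_cast; ring_nf

theorem exists_disjunct_of_card_lt {t n d : ℕ}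
    (h : n ^ (d + 1) * ((d + 1) ^ n - d ^ d * (d + 1) ^ (n - d - 1)) ^ t < ((d + 1) ^ n) ^ t) :
    ∃ M : Fin t → Fin n → Bool, Disjunct M d := by
  let Bad (p : Fin n × Finset (Fin n)) (M : Fin t → Fin n → Fin (d + 1)) : Prop :=
    p.1 ∉ p.2 ∧ ∀ j, ¬Isolates 0 p.1 p.2 (M j)
  have hbad : ∀ p ∈ univ ×ˢ powersetCard d univ,
      #{M | Bad p M} ≤ ((d + 1) ^ n - d ^ d * (d + 1) ^ (n - d - 1)) ^ t := by
    rintro ⟨i, S⟩ hp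
    rw [mem_product, mem_powersetCard] at hp
    by_cases hi : i ∈ S
    · simp [Bad, hi]
    calc #{M | Bad (i, S) M}
        ≤ #{M : Fin t → Fin n → Fin (d + 1) | ∀ j, ¬Isolates 0 i S (M j)} :=
          card_le_card fun M ↦ by simp +contextual [Bad]
      _ = (Fintype.card (Fin n → Fin (d + 1)) -
            #{r : Fin n → Fin (d + 1) | Isolates 0 i S r}) ^ t := by
          rw [card_filter_forall_fun fun r : Fin n → Fin (d + 1) ↦ ¬Isolates 0 i S r,
            Fintype.card_fin, ← card_univ, filter_not, card_sdiff_of_subset (filter_subset _ _)]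
      _ = _ := by
          rw [card_filter_isolates 0 hi]
          simp [hp.2.2]
  have hcount : #((univ : Finset (Fin n)) ×ˢ powersetCard d univ) *
      ((d + 1) ^ n - d ^ d * (d + 1) ^ (n - d - 1)) ^ t <
      Fintype.card (Fin t → Fin n → Fin (d + 1)) := calc
    _ ≤ n ^ (d + 1) * ((d + 1) ^ n - d ^ d * (d + 1) ^ (n - d - 1)) ^ t := by
      gcongr
      rw [card_product, card_powersetCard, card_univ, Fintype.card_fin, pow_succ']
      exact Nat.mul_le_mul_left n (Nat.choose_le_pow n d)
    _ < ((d + 1) ^ n) ^ t := h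
    _ = Fintype.card (Fin t → Fin n → Fin (d + 1)) := by simp
  obtain ⟨M, hM⟩ := exists_forall_not_of_card_mul_lt _ Bad _ hbad hcount
  refine ⟨fun j k ↦ decide (M j k = 0), fun i S hS hi ↦ ?_⟩
  obtain ⟨j, hj⟩ : ∃ j, Isolates 0 i S (M j) := by
    simpa [Bad, hi] using hM (i, S) (by simp [hS])
  exact ⟨j, decide_eq_true hj.1, fun k hk ↦ decide_eq_false (hj.2 k hk)⟩

/-- For a sufficiently large absolute constant `C`, for every `n` and `d ≤ n`
there exists a `d`-disjunct Boolean matrix with `C·d²·log n` rows. -/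
theorem stmt1 :
    ∃ C : ℕ, 0 < C ∧ ∀ n d : ℕ, 1 ≤ d → d ≤ n →
      ∃ M : Fin (C * d ^ 2 * (Nat.log 2 n + 1)) → Fin n → Bool, Disjunct M d := by
  refine ⟨16, by norm_num, fun n d hd hdn ↦ exists_disjunct_of_card_lt ?_⟩
  refine mul_sub_pow_lt_pow (m := 4 * (d + 1)) (by positivity) (pow_mul_succ_pow_le_succ_pow hdn)
    (succ_pow_le_mul_pow_mul_succ_pow n d) ?_
  have hd' : (1 : ℝ) ≤ d := by exact_mod_cast hd
  calc ((n ^ (d + 1) : ℕ) : ℝ) < Real.exp ((d + 1) * (Nat.log 2 n + 1)) := by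
        rw [Nat.cast_pow, ← Nat.cast_succ, Real.exp_nat_mul]
        gcongr
        exact natCast_lt_exp_log_two_add_one n
    _ ≤ _ := by
        gcongr
        rw [le_div_iff₀ (by positivity)]
        push_cast
        nlinarith [mul_le_mul_of_nonneg_left (by nlinarith : ((d : ℝ) + 1) ^ 2 ≤ 4 * d ^ 2)
          (by positivity : (0 : ℝ) ≤ 4 * (Nat.log 2 n + 1))]
end

section
/- Every set of assignments that the teacher can force an adaptive deterministic learning algorithm for DT_d to query (when all answers are 0) must be an (n,d)-universal set; consequently, any deterministic exact learning algorithm for depth-d decision trees from membership queries must ask at least as many queries as the minimum size of an (n,d)-universal set. -/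
/-!
Adversary argument: answer every query with `0`. If the queries asked in this run miss some
pattern `b` on a set `I` of `d` coordinates, then the conjunction of the literals `x_i = b_i`,
`i ∈ I`, is a depth-`d` tree that also answers `0` on all of them. The learner therefore sees the
same transcript for it as for the constant `0` tree and cannot output both correctly.
-/

/-- Decision trees over `n` Boolean variables. -/
inductive DecTree (n : ℕ) where
  | leaf : Bool → DecTree n
  | node : Fin n → DecTree n → DecTree n → DecTree n

namespace DecTree

def eval {n : ℕ} : DecTree n → (Fin n → Bool) → Bool
  | leaf b, _ => b
  | node i t0 t1, x => if x i then t1.eval x else t0.eval x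

def depth {n : ℕ} : DecTree n → ℕ
  | leaf _ => 0
  | node _ t0 t1 => max t0.depth t1.depth + 1

end DecTree

/-- `A ⊆ {0,1}ⁿ` is an `(n,d)`-universal set. -/
def UniversalSet {n : ℕ} (A : Set (Fin n → Bool)) (d : ℕ) : Prop :=
  ∀ I : Finset (Fin n), I.card = d → ∀ b : Fin n → Bool,
    ∃ a ∈ A, ∀ i ∈ I, a i = b i

/-- The transcript of answers when an adaptive deterministic algorithm with
next-query map `query` interacts for `k` rounds with a teacher holding `f`. -/
def transcript {X : Type*} (query : List Bool → X) (f : X → Bool) : ℕ → List Bool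
  | 0 => []
  | k + 1 => transcript query f k ++ [f (query (transcript query f k))]

namespace DecTree

variable {n : ℕ}

def conj (b : Fin n → Bool) : List (Fin n) → DecTree n
  | [] => leaf true
  | i :: l => if b i then node i (leaf false) (conj b l) else node i (conj b l) (leaf false)

theorem eval_conj (b : Fin n → Bool) (l : List (Fin n)) (x : Fin n → Bool) :
    (conj b l).eval x = true ↔ ∀ i ∈ l, x i = b i := by
  induction l with
  | nil => simp [conj, eval]
  | cons i l ih => cases hb : b i <;> cases hx : x i <;> simp [conj, eval, hb, hx, ih]

theorem depth_conj_le (b : Fin n → Bool) (l : List (Fin n)) : (conj b l).depth ≤ l.length := by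
  induction l with
  | nil => simp [conj, depth]
  | cons i l ih => by_cases hb : b i <;> simp [conj, hb, depth] <;> omega

end DecTree

section Learner

variable {X : Type*} [DecidableEq X] (query : List Bool → X)

def queries (f : X → Bool) (q : ℕ) : Finset X :=
  ((List.range q).map fun k => query (transcript query f k)).toFinset

variable {query}

theorem mem_queries {f : X → Bool} {q : ℕ} {x : X} :
    x ∈ queries query f q ↔ ∃ k < q, query (transcript query f k) = x := by
  simp [queries]

theorem card_queries_le (f : X → Bool) (q : ℕ) : (queries query f q).card ≤ q :=
  (List.toFinset_card_le _).trans_eq (by simp)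

theorem transcript_congr {f g : X → Bool} {q : ℕ} (h : ∀ x ∈ queries query f q, g x = f x) :
    transcript query g q = transcript query f q := by
  induction q with
  | zero => rfl
  | succ k ih =>
    have hk : transcript query g k = transcript query f k :=
      ih fun x hx => h x (mem_queries.2 <| by
        obtain ⟨j, hj, rfl⟩ := mem_queries.1 hx
        exact ⟨j, by omega, rfl⟩)
    simp only [transcript, hk, h _ (mem_queries.2 ⟨k, k.lt_succ_self, rfl⟩)]

theorem eq_of_learns_of_agree_on_queries {output : List Bool → X → Bool} {f g : X → Bool}
    {q : ℕ}
    (hf : output (transcript query f q) = f) (hg : output (transcript query g q) = g)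
    (h : ∀ x ∈ queries query f q, g x = f x) : g = f := by
  rw [← hf, ← hg, transcript_congr h]

end Learner

theorem universalSet_queries_of_learns {n d q : ℕ} (query : List Bool → (Fin n → Bool))
    (output : List Bool → ((Fin n → Bool) → Bool))
    (hcorrect : ∀ T : DecTree n, T.depth ≤ d →
      output (transcript query T.eval q) = fun x => T.eval x) :
    UniversalSet (queries query (fun _ => false) q : Set (Fin n → Bool)) d := by
  intro I hI b
  by_contra! hmiss
  set T := DecTree.conj b I.toList
  have hdepth : T.depth ≤ d := by simpa [hI] using DecTree.depth_conj_le b I.toList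
  have hzero : ∀ a ∈ queries query (fun _ => false) q, T.eval a = false := by
    intro a ha
    obtain ⟨i, hi, hai⟩ := hmiss a ha
    exact Bool.eq_false_iff.2 fun h => hai ((DecTree.eval_conj b _ a).1 h i (I.mem_toList.2 hi))
  have hT : T.eval = fun _ => false :=
    eq_of_learns_of_agree_on_queries (hcorrect (.leaf false) (Nat.zero_le d))
      (hcorrect T hdepth) hzero
  have hb : T.eval b = true := (DecTree.eval_conj b _ b).2 fun _ _ => rfl
  simp [hT] at hb

theorem stmt4_general {n d q : ℕ}
    (query : List Bool → (Fin n → Bool))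
    (output : List Bool → ((Fin n → Bool) → Bool))
    (hcorrect : ∀ T : DecTree n, T.depth ≤ d →
      output (transcript query T.eval q) = fun x => T.eval x) :
    let U : Finset (Fin n → Bool) :=
      ((List.range q).map fun k =>
        query (transcript query (fun _ => false) k)).toFinset
    UniversalSet (U : Set (Fin n → Bool)) d ∧ U.card ≤ q ∧
      ∀ m : ℕ, (∀ V : Finset (Fin n → Bool), UniversalSet (V : Set (Fin n → Bool)) d → m ≤ V.card) →
        m ≤ q := by
  have huniv := universalSet_queries_of_learns query output hcorrect
  have hcard := card_queries_le (query := query) (fun _ => false) q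
  exact ⟨huniv, hcard, fun m hm => (hm _ huniv).trans hcard⟩

/-- Any adaptive deterministic exact learner for depth-`d` decision trees
making `q` membership queries, when run against the all-zero teacher, asks a
set of queries that forms an `(n,d)`-universal set of size at most `q`;
consequently `q` is at least the minimum size of an `(n,d)`-universal set. -/
theorem stmt4 {n d q : ℕ} (hd : d ≤ n)
    (query : List Bool → (Fin n → Bool))
    (output : List Bool → ((Fin n → Bool) → Bool))
    (hcorrect : ∀ T : DecTree n, T.depth ≤ d →
      output (transcript query T.eval q) = fun x => T.eval x) :
    let U : Finset (Fin n → Bool) :=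
      ((List.range q).map fun k =>
        query (transcript query (fun _ => false) k)).toFinset
    UniversalSet (U : Set (Fin n → Bool)) d ∧ U.card ≤ q ∧
      ∀ m : ℕ, (∀ V : Finset (Fin n → Bool), UniversalSet (V : Set (Fin n → Bool)) d → m ≤ V.card) →
        m ≤ q :=
  stmt4_general query output hcorrect
end

section
/- For any finite class C of Boolean functions on a finite domain X, ETD(C) ≤ TD(2^X, C) ≤ ETD(C) + 1. -/
/-!
An identity test set `A` for `h` is exactly a set on which only `h` itself (if it lies in `C`)
agrees with `h`; in particular it is a specifying set, whence `ETD(C) ≤ TD(2^X, C)`.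
Conversely, if `T` specifies `h`, at most one `f₀ ∈ C` agrees with `h` on `T`; adding to `T` one
point where `f₀` and `h` differ (when `f₀ ≠ h`) yields an identity test set, whence
`TD(2^X, C) ≤ ETD(C) + 1`.
-/

variable {X : Type*} [Fintype X] [DecidableEq X]

/-- `T` is a specifying set for `h` with respect to `C`: at most one function
in `C` agrees with `h` on all of `T`. -/
def IsSpecSet (C : Finset (X → Bool)) (h : X → Bool) (T : Finset X) : Prop :=
  (C.filter (fun f => ∀ x ∈ T, f x = h x)).card ≤ 1

/-- The minimum size of a specifying set for `h` with respect to `C`. -/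
noncomputable def specNum (C : Finset (X → Bool)) (h : X → Bool) : ℕ :=
  sInf {k | ∃ T : Finset X, T.card = k ∧ IsSpecSet C h T}

/-- The extended teaching dimension of `C`. -/
noncomputable def ETD (C : Finset (X → Bool)) : ℕ :=
  sSup {k | ∃ h : X → Bool, specNum C h = k}

/-- `A` is an identity test set for `h` with respect to `C`. -/
def IsITSet (C : Finset (X → Bool)) (h : X → Bool) (A : Finset X) : Prop :=
  ∀ f ∈ C, f ≠ h → ∃ a ∈ A, f a ≠ h a

/-- The minimum size of an identity test set for `h` with respect to `C`. -/
noncomputable def itNum (C : Finset (X → Bool)) (h : X → Bool) : ℕ :=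
  sInf {k | ∃ A : Finset X, A.card = k ∧ IsITSet C h A}

/-- `TD(2^X, C)`: the maximum over all Boolean `h` on `X` of the minimum size
identity test set for `h` with respect to `C`. -/
noncomputable def TDfull (C : Finset (X → Bool)) : ℕ :=
  sSup {k | ∃ h : X → Bool, itNum C h = k}

section TestSets

variable {C : Finset (X → Bool)} {h : X → Bool} {A T : Finset X}

omit [Fintype X] [DecidableEq X] in
theorem isITSet_iff : IsITSet C h A ↔ ∀ f ∈ C, (∀ a ∈ A, f a = h a) → f = h := by
  simp only [IsITSet, not_imp_comm, not_exists, not_and, not_not]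

omit [DecidableEq X] in
theorem isITSet_univ : IsITSet C h Finset.univ :=
  isITSet_iff.2 fun _ _ hf => funext fun x => hf x (Finset.mem_univ x)

theorem IsITSet.isSpecSet (hA : IsITSet C h A) : IsSpecSet C h A := by
  refine Finset.card_le_one_iff_subset_singleton.2 ⟨h, fun f hf => ?_⟩
  rw [Finset.mem_filter] at hf
  exact Finset.mem_singleton.2 (isITSet_iff.1 hA f hf.1 hf.2)

theorem IsSpecSet.exists_isITSet (hT : IsSpecSet C h T) :
    ∃ A, IsITSet C h A ∧ A.card ≤ T.card + 1 := by
  obtain ⟨f₀, hf₀⟩ := Finset.card_le_one_iff_subset_singleton.1 hT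
  have eq_f₀ : ∀ f ∈ C, (∀ a ∈ T, f a = h a) → f = f₀ := fun f hf hfT =>
    Finset.mem_singleton.1 (hf₀ (Finset.mem_filter.2 ⟨hf, hfT⟩))
  by_cases hf₀h : f₀ = h
  · exact ⟨T, isITSet_iff.2 fun f hf hfT => hf₀h ▸ eq_f₀ f hf hfT, Nat.le_succ _⟩
  obtain ⟨x, hx⟩ := Function.ne_iff.1 hf₀h
  refine ⟨insert x T, isITSet_iff.2 fun f hf hfxT => ?_, Finset.card_insert_le x T⟩
  rw [Finset.forall_mem_insert] at hfxT
  exact absurd (eq_f₀ f hf hfxT.2 ▸ hfxT.1) hx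

end TestSets

section Numbers

variable (C : Finset (X → Bool)) (h : X → Bool)

omit [DecidableEq X] in
theorem exists_isITSet_card_eq_itNum : ∃ A, A.card = itNum C h ∧ IsITSet C h A :=
  Nat.sInf_mem (s := {k | ∃ A : Finset X, A.card = k ∧ IsITSet C h A})
    ⟨_, Finset.univ, rfl, isITSet_univ⟩

theorem exists_isSpecSet_card_eq_specNum : ∃ T, T.card = specNum C h ∧ IsSpecSet C h T :=
  Nat.sInf_mem (s := {k | ∃ T : Finset X, T.card = k ∧ IsSpecSet C h T})
    ⟨_, Finset.univ, rfl, isITSet_univ.isSpecSet⟩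

variable {C h}

omit [Fintype X] [DecidableEq X] in
theorem IsITSet.itNum_le_card {A : Finset X} (hA : IsITSet C h A) : itNum C h ≤ A.card := by
  unfold itNum
  exact Nat.sInf_le ⟨A, rfl, hA⟩

theorem IsSpecSet.specNum_le_card {T : Finset X} (hT : IsSpecSet C h T) :
    specNum C h ≤ T.card := by
  unfold specNum
  exact Nat.sInf_le ⟨T, rfl, hT⟩

variable (C h)

theorem specNum_le_itNum : specNum C h ≤ itNum C h := by
  obtain ⟨A, hA, hAIT⟩ := exists_isITSet_card_eq_itNum C h
  exact hA ▸ hAIT.isSpecSet.specNum_le_card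

theorem itNum_le_specNum_add_one : itNum C h ≤ specNum C h + 1 := by
  obtain ⟨T, hT, hTspec⟩ := exists_isSpecSet_card_eq_specNum C h
  obtain ⟨A, hAIT, hAT⟩ := hTspec.exists_isITSet
  exact hT ▸ hAIT.itNum_le_card.trans hAT

end Numbers

/-- `ETD(C) ≤ TD(2^X, C) ≤ ETD(C) + 1`. -/
theorem stmt7 (C : Finset (X → Bool)) :
    ETD C ≤ TDfull C ∧ TDfull C ≤ ETD C + 1 := by
  change ⨆ h, specNum C h ≤ ⨆ h, itNum C h ∧ ⨆ h, itNum C h ≤ (⨆ h, specNum C h) + 1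
  have bdd : ∀ g : (X → Bool) → ℕ, BddAbove (Set.range g) := fun g =>
    (Set.finite_range g).bddAbove
  exact ⟨ciSup_mono (bdd _) (specNum_le_itNum C),
    ciSup_le fun h => (itNum_le_specNum_add_one C h).trans
      (Nat.add_le_add_right (le_ciSup (bdd _) h) 1)⟩
end

section
/- For every n and r+s ≤ n, any equivalent test set A ⊆ {0,1}^n for the class of s-term r-MDNF formulas is both an (n,(s,r-1))-cover free family and an (n,(s-1,r))-cover free family. -/
/-!
Given disjoint `S` and `J`, take monotone DNFs `F ≤ G` that the indicator of `J` separates,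
chosen so that `F a = 0` and `G a = 1` force `a` to be `0` on `S` and `1` on `J`; an
equivalent test set must contain such a point `a`. For `(s, r-1)` take
`F = ⋁_{i ∈ S} (x_i ∧ ⋀_{j ∈ J} x_j)` and `G = ⋀_{j ∈ J} x_j`; for `(s-1, r)` take
`F = ⋁_{i ∈ S} x_i` and `G = F ∨ ⋀_{j ∈ J} x_j`.
-/

/-- Evaluation of a monotone DNF, given as the finite set of its monomials
(each a finite set of variables). -/
def evalMDNF {n : ℕ} (F : Finset (Finset (Fin n))) (a : Fin n → Bool) : Bool :=
  decide (∃ T ∈ F, ∀ i ∈ T, a i = true)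

/-- `A ⊆ {0,1}ⁿ` is an `(n,(s,r))`-cover free family: for every `s + r`
distinct indices split into a set `S` of `s` indices and a set `J` of `r`
indices, some `a ∈ A` is `0` on `S` and `1` on `J`. -/
def CFF (n : ℕ) (s r : ℕ) (A : Set (Fin n → Bool)) : Prop :=
  ∀ S J : Finset (Fin n), S.card = s → J.card = r → Disjoint S J →
    ∃ a ∈ A, (∀ i ∈ S, a i = false) ∧ (∀ i ∈ J, a i = true)

/-- `A` is an equivalent test set for `s`-term `r`-MDNF: any two non-equivalent
monotone DNFs with at most `s` terms of size at most `r` differ on `A`. -/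
def IsETS {n : ℕ} (A : Set (Fin n → Bool)) (s r : ℕ) : Prop :=
  ∀ F₁ F₂ : Finset (Finset (Fin n)),
    F₁.card ≤ s → F₂.card ≤ s →
    (∀ T ∈ F₁, T.card ≤ r) → (∀ T ∈ F₂, T.card ≤ r) →
    (∃ x, evalMDNF F₁ x ≠ evalMDNF F₂ x) →
    ∃ a ∈ A, evalMDNF F₁ a ≠ evalMDNF F₂ a

open Finset

section evalMDNF

variable {n : ℕ}

lemma evalMDNF_eq_true (F : Finset (Finset (Fin n))) (a : Fin n → Bool) :
    evalMDNF F a = true ↔ ∃ T ∈ F, ∀ i ∈ T, a i = true := by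
  simp [evalMDNF]

lemma evalMDNF_eq_false (F : Finset (Finset (Fin n))) (a : Fin n → Bool) :
    evalMDNF F a = false ↔ ∀ T ∈ F, ∃ i ∈ T, a i = false := by
  simp [evalMDNF]

lemma evalMDNF_singleton (T : Finset (Fin n)) (a : Fin n → Bool) :
    evalMDNF {T} a = true ↔ ∀ i ∈ T, a i = true := by
  simp [evalMDNF]

lemma evalMDNF_indicator (F : Finset (Finset (Fin n))) (J : Finset (Fin n)) :
    evalMDNF F (fun i => decide (i ∈ J)) = true ↔ ∃ T ∈ F, T ⊆ J := by
  simp [evalMDNF, subset_iff]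

lemma evalMDNF_le_of_forall_exists_subset {F G : Finset (Finset (Fin n))}
    (h : ∀ T ∈ F, ∃ T' ∈ G, T' ⊆ T) (a : Fin n → Bool) :
    evalMDNF F a ≤ evalMDNF G a := by
  refine Bool.le_iff_imp.2 fun hF => ?_
  obtain ⟨T, hT, haT⟩ := (evalMDNF_eq_true F a).1 hF
  obtain ⟨T', hT', hT'T⟩ := h T hT
  exact (evalMDNF_eq_true G a).2 ⟨T', hT', fun i hi => haT i (hT'T hi)⟩

end evalMDNF

namespace IsETS

variable {n s r : ℕ} {A : Set (Fin n → Bool)}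

lemma exists_mem_eval_false_true (hA : IsETS A s r) {F G : Finset (Finset (Fin n))}
    (hF : F.card ≤ s) (hG : G.card ≤ s) (hFr : ∀ T ∈ F, T.card ≤ r)
    (hGr : ∀ T ∈ G, T.card ≤ r) (hFG : ∀ x, evalMDNF F x ≤ evalMDNF G x)
    {x : Fin n → Bool} (hx : evalMDNF F x ≠ evalMDNF G x) :
    ∃ a ∈ A, evalMDNF F a = false ∧ evalMDNF G a = true := by
  obtain ⟨a, ha, hne⟩ := hA F G hF hG hFr hGr ⟨x, hx⟩
  have hle := hFG a
  exact ⟨a, ha, by revert hne hle; cases evalMDNF F a <;> cases evalMDNF G a <;> simp⟩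

lemma cff_fewer_ones (hA : IsETS A s r) (hr : 1 ≤ r) (hs : 1 ≤ s) : CFF n s (r - 1) A := by
  intro S J hS hJ hSJ
  set F : Finset (Finset (Fin n)) := S.image (insert · J)
  have hx : evalMDNF F (fun i => decide (i ∈ J)) ≠ evalMDNF {J} (fun i => decide (i ∈ J)) := by
    rw [(evalMDNF_indicator {J} J).2 ⟨J, mem_singleton_self J, subset_rfl⟩]
    rintro hF
    obtain ⟨_, hT, hTJ⟩ := (evalMDNF_indicator F J).1 hF
    obtain ⟨i, hi, rfl⟩ := mem_image.1 hT
    exact disjoint_left.1 hSJ hi (hTJ (mem_insert_self i J))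
  obtain ⟨a, ha, hSa, hJa⟩ := hA.exists_mem_eval_false_true (card_image_le.trans hS.le)
    (by simpa using hs)
    (by
      simp only [mem_image, forall_exists_index, and_imp]
      rintro _ i - rfl
      exact (card_insert_le i J).trans (by omega))
    (by simp only [mem_singleton, forall_eq]; omega)
    (evalMDNF_le_of_forall_exists_subset (by simp [subset_insert])) hx
  have hJa : ∀ j ∈ J, a j = true := (evalMDNF_singleton J a).1 hJa
  refine ⟨a, ha, fun i hi => ?_, hJa⟩
  obtain ⟨k, hk, hak⟩ := (evalMDNF_eq_false F a).1 hSa _ (mem_image_of_mem _ hi)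
  rcases mem_insert.1 hk with rfl | hkJ
  · exact hak
  · simp [hJa k hkJ] at hak

lemma cff_fewer_zeros (hA : IsETS A s r) (hr : 1 ≤ r) (hs : 1 ≤ s) : CFF n (s - 1) r A := by
  intro S J hS hJ hSJ
  set F : Finset (Finset (Fin n)) := S.image ({·})
  have hF : F.card ≤ s - 1 := card_image_le.trans hS.le
  have hFr : ∀ T ∈ F, T.card ≤ r := by simpa [F] using fun _ _ => hr
  have hx :
      evalMDNF F (fun i => decide (i ∈ J)) ≠ evalMDNF (insert J F) (fun i => decide (i ∈ J)) := by
    rw [(evalMDNF_indicator (insert J F) J).2 ⟨J, mem_insert_self J F, subset_rfl⟩]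
    rintro hF
    obtain ⟨_, hT, hTJ⟩ := (evalMDNF_indicator F J).1 hF
    obtain ⟨i, hi, rfl⟩ := mem_image.1 hT
    exact disjoint_left.1 hSJ hi (hTJ (mem_singleton_self i))
  obtain ⟨a, ha, hSa, hJa⟩ := hA.exists_mem_eval_false_true (hF.trans (Nat.sub_le s 1))
    ((card_insert_le J F).trans (by omega)) hFr (forall_mem_insert _ _ _ |>.2 ⟨hJ.le, hFr⟩)
    (evalMDNF_le_of_forall_exists_subset fun T hT => ⟨T, mem_insert_of_mem hT, subset_rfl⟩) hx
  have hSa : ∀ i ∈ S, a i = false := fun i hi => by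
    simpa using (evalMDNF_eq_false F a).1 hSa {i} (mem_image_of_mem _ hi)
  refine ⟨a, ha, hSa, ?_⟩
  obtain ⟨T, hT, haT⟩ := (evalMDNF_eq_true _ a).1 hJa
  rcases mem_insert.1 hT with rfl | hT
  · exact haT
  · obtain ⟨i, hi, rfl⟩ := mem_image.1 hT
    simp [hSa i hi] at haT

end IsETS

theorem stmt11_general {n s r : ℕ} (hr : 1 ≤ r) (hs : 1 ≤ s)
    (A : Set (Fin n → Bool)) (hA : IsETS A s r) :
    CFF n s (r - 1) A ∧ CFF n (s - 1) r A :=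
  ⟨hA.cff_fewer_ones hr hs, hA.cff_fewer_zeros hr hs⟩

/-- Any equivalent test set for `s`-term `r`-MDNF is both an
`(n,(s,r-1))`-CFF and an `(n,(s-1,r))`-CFF. -/
theorem stmt11 {n s r : ℕ} (hrs : r + s ≤ n) (hr : 1 ≤ r) (hs : 1 ≤ s)
    (A : Set (Fin n → Bool)) (hA : IsETS A s r) :
    CFF n s (r - 1) A ∧ CFF n (s - 1) r A :=
  stmt11_general hr hs A hA
end

section
/- Any (n,(s,r))-cover free family is an equivalent test set for the class of s-term r-MDNF formulas: for any two non-equivalent monotone DNFs f₁, f₂ each with at most s monomials of size at most r, there is an assignment a in the cover free family with f₁(a) ≠ f₂(a). -/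
/-!
If `f₁(x) = 1` and `f₂(x) = 0`, pick a monomial `T` of `f₁` satisfied by `x`, and in each of the
at most `s` monomials of `f₂` a variable that `x` sets to `0`. These variables form a set `S₀`
with `|S₀| ≤ s`, disjoint from `T`, `|T| ≤ r`. Padding both to sizes exactly `s` and `r`, the cover
free family supplies an `a` that is `0` on `S₀` and `1` on `T`: it satisfies `T`, hence `f₁`,
and falsifies every monomial of `f₂`.
-/

lemma evalMDNF_eq_true_iff {n : ℕ} {F : Finset (Finset (Fin n))} {a : Fin n → Bool} :
    evalMDNF F a = true ↔ ∃ T ∈ F, ∀ i ∈ T, a i = true := by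
  simp [evalMDNF]

lemma evalMDNF_eq_false_iff {n : ℕ} {F : Finset (Finset (Fin n))} {a : Fin n → Bool} :
    evalMDNF F a = false ↔ ∀ T ∈ F, ∃ i ∈ T, a i = false := by
  simp [evalMDNF]

lemma Finset.exists_transversal_card_le {α : Type*} [DecidableEq α] (p : α → Prop)
    (F : Finset (Finset α)) (hF : ∀ T ∈ F, ∃ i ∈ T, p i) :
    ∃ S : Finset α, S.card ≤ F.card ∧ (∀ i ∈ S, p i) ∧ ∀ T ∈ F, ∃ i ∈ T, i ∈ S := by
  induction F using Finset.induction_on with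
  | empty => exact ⟨∅, by simp, by simp, by simp⟩
  | @insert T F hTF ih =>
    obtain ⟨S, hcard, hp, hmeet⟩ := ih fun T' hT' => hF T' (mem_insert_of_mem hT')
    obtain ⟨i, hiT, hpi⟩ := hF T (mem_insert_self T F)
    refine ⟨insert i S, ?_, ?_, ?_⟩
    · rw [card_insert_of_notMem hTF]
      exact (card_insert_le i S).trans (by omega)
    · simpa [hpi] using hp
    · simp only [mem_insert, forall_eq_or_imp]
      exact ⟨⟨i, hiT, Or.inl rfl⟩, fun T' hT' =>
        (hmeet T' hT').imp fun j hj => ⟨hj.1, Or.inr hj.2⟩⟩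

lemma Finset.exists_disjoint_supersets_card_eq {α : Type*} [Fintype α] [DecidableEq α]
    {S₀ T : Finset α} {s r : ℕ} (hST : Disjoint S₀ T) (hS₀ : S₀.card ≤ s) (hT : T.card ≤ r)
    (hsr : s + r ≤ Fintype.card α) :
    ∃ S J : Finset α, S₀ ⊆ S ∧ T ⊆ J ∧ S.card = s ∧ J.card = r ∧ Disjoint S J := by
  obtain ⟨J, hTJ, hJS₀, hJ⟩ := exists_subsuperset_card_eq
    (subset_compl_iff_disjoint_left.mpr hST) hT (by rw [card_compl]; omega)
  obtain ⟨S, hS₀S, hSJ, hS⟩ := exists_subsuperset_card_eq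
    (subset_compl_comm.mp hJS₀) hS₀ (by rw [card_compl, hJ]; omega)
  exact ⟨S, J, hS₀S, hTJ, hS, hJ, subset_compl_iff_disjoint_right.mp hSJ⟩

lemma CFF.exists_false_on_true_on {n s r : ℕ} {A : Set (Fin n → Bool)} (hA : CFF n s r A)
    (hsr : s + r ≤ n) {S₀ T : Finset (Fin n)} (hST : Disjoint S₀ T) (hS₀ : S₀.card ≤ s)
    (hT : T.card ≤ r) :
    ∃ a ∈ A, (∀ i ∈ S₀, a i = false) ∧ ∀ i ∈ T, a i = true := by
  obtain ⟨S, J, hS₀S, hTJ, hS, hJ, hSJ⟩ :=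
    Finset.exists_disjoint_supersets_card_eq hST hS₀ hT (by simpa using hsr)
  obtain ⟨a, haA, haS, haJ⟩ := hA S J hS hJ hSJ
  exact ⟨a, haA, fun i hi => haS i (hS₀S hi), fun i hi => haJ i (hTJ hi)⟩

lemma CFF.exists_true_false {n s r : ℕ} {A : Set (Fin n → Bool)} (hA : CFF n s r A)
    (hsr : s + r ≤ n) {F₁ F₂ : Finset (Finset (Fin n))} (hF₁ : ∀ T ∈ F₁, T.card ≤ r)
    (hF₂ : F₂.card ≤ s) {x : Fin n → Bool} (hx₁ : evalMDNF F₁ x = true)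
    (hx₂ : evalMDNF F₂ x = false) :
    ∃ a ∈ A, evalMDNF F₁ a = true ∧ evalMDNF F₂ a = false := by
  obtain ⟨T, hTF₁, hxT⟩ := evalMDNF_eq_true_iff.mp hx₁
  obtain ⟨S₀, hS₀, hxS₀, hS₀F₂⟩ :=
    Finset.exists_transversal_card_le (fun i => x i = false) F₂ (evalMDNF_eq_false_iff.mp hx₂)
  have hS₀T : Disjoint S₀ T :=
    Finset.disjoint_left.mpr fun i hiS hiT => by simpa [hxS₀ i hiS] using hxT i hiT
  obtain ⟨a, haA, haS₀, haT⟩ := hA.exists_false_on_true_on hsr hS₀T (hS₀.trans hF₂) (hF₁ T hTF₁)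
  refine ⟨a, haA, evalMDNF_eq_true_iff.mpr ⟨T, hTF₁, haT⟩, evalMDNF_eq_false_iff.mpr ?_⟩
  intro T' hT'
  obtain ⟨i, hiT', hiS₀⟩ := hS₀F₂ T' hT'
  exact ⟨i, hiT', haS₀ i hiS₀⟩

/-- Any `(n,(s,r))`-cover free family is an equivalent test set for the class
of `s`-term `r`-MDNF formulas. -/
theorem stmt12 {n s r : ℕ} (hrs : s + r ≤ n)
    (A : Set (Fin n → Bool)) (hA : CFF n s r A) :
    ∀ F₁ F₂ : Finset (Finset (Fin n)),
      F₁.card ≤ s → F₂.card ≤ s →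
      (∀ T ∈ F₁, T.card ≤ r) → (∀ T ∈ F₂, T.card ≤ r) →
      (∃ x, evalMDNF F₁ x ≠ evalMDNF F₂ x) →
      ∃ a ∈ A, evalMDNF F₁ a ≠ evalMDNF F₂ a := by
  rintro F₁ F₂ hF₁ hF₂ hr₁ hr₂ ⟨x, hx⟩
  obtain ⟨h₁, h₂⟩ | ⟨h₂, h₁⟩ : evalMDNF F₁ x = true ∧ evalMDNF F₂ x = false ∨
      evalMDNF F₂ x = true ∧ evalMDNF F₁ x = false := by
    revert hx; cases evalMDNF F₁ x <;> cases evalMDNF F₂ x <;> simp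
  · obtain ⟨a, haA, ha₁, ha₂⟩ := hA.exists_true_false hrs hr₁ hF₂ h₁ h₂
    exact ⟨a, haA, by simp [ha₁, ha₂]⟩
  · obtain ⟨a, haA, ha₂, ha₁⟩ := hA.exists_true_false hrs hr₂ hF₁ h₂ h₁
    exact ⟨a, haA, by simp [ha₁, ha₂]⟩
end

section
/- Schwartz–Zippel: Let F be a field, f ∈ F[x_1,...,x_n] a nonzero polynomial of total degree at most d, and S ⊆ F a finite set. If y_1,...,y_n are chosen independently and uniformly at random from S, then Pr[f(y_1,...,y_n) ≠ 0] ≥ 1 − d/|S|. -/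
/-!
By the Schwartz–Zippel lemma of Mathlib (`MvPolynomial.schwartz_zippel_totalDegree`, induction on
the number of variables through the leading coefficient in one of them), `f` has at most
`(deg f / |S|) · |S|ⁿ` zeros in `Sⁿ`; the tuples on which `f` does not vanish are the complement.
-/

open Finset MvPolynomial

lemma card_filter_univ_pi_subtype {ι α : Type*} [Fintype ι] [DecidableEq ι] [DecidableEq α]
    (S : Finset α) (P : (ι → α) → Prop) [DecidablePred P] :
    #{y : ι → S | P fun i ↦ y i} = #{x ∈ Fintype.piFinset fun _ ↦ S | P x} := by
  refine card_bij (fun y _ i ↦ y i) ?_ ?_ ?_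
  · intro y hy
    simpa using hy
  · intro y _ z _ h
    funext i
    exact Subtype.ext (congrFun h i)
  · intro x hx
    simp only [mem_filter, Fintype.mem_piFinset] at hx
    exact ⟨fun i ↦ ⟨x i, hx.1 i⟩, by simpa using hx.2, rfl⟩

lemma MvPolynomial.card_zeros_le_totalDegree_div_mul {R : Type*} [CommRing R] [IsDomain R]
    [DecidableEq R] {n : ℕ} {p : MvPolynomial (Fin n) R} (hp : p ≠ 0) (S : Finset R) :
    (#{x ∈ Fintype.piFinset fun _ ↦ S | eval x p = 0} : ℝ) ≤ p.totalDegree / #S * #S ^ n := by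
  -- when `#S ^ n = 0` the ratio in Mathlib's bound is junk, but then there are no points at all
  obtain hS | hS := eq_or_ne (#S ^ n) 0
  · have hle : #{x ∈ Fintype.piFinset fun _ ↦ S | eval x p = 0} ≤ #S ^ n :=
      (card_filter_le _ _).trans (by simp)
    rw [Nat.eq_zero_of_le_zero (hle.trans hS.le), Nat.cast_zero]
    positivity
  · have hSZ := schwartz_zippel_totalDegree hp S
    rw [div_le_iff₀ (pos_of_ne_zero (by exact_mod_cast hS))] at hSZ
    simpa using (NNRat.cast_le (K := ℝ)).mpr hSZ

theorem stmt14_general {F : Type*} [Field F] [DecidableEq F] {n d : ℕ}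
    (f : MvPolynomial (Fin n) F) (hf : f ≠ 0) (hd : f.totalDegree ≤ d)
    (S : Finset F) :
    (1 - (d : ℝ) / S.card) * (S.card : ℝ) ^ n ≤
      ((Finset.univ.filter fun y : Fin n → ↥S =>
        MvPolynomial.eval (fun i => (y i : F)) f ≠ 0).card : ℝ) := by
  have hsplit : (#{y : Fin n → S | eval (fun i ↦ (y i : F)) f = 0} : ℝ) +
      #{y : Fin n → S | eval (fun i ↦ (y i : F)) f ≠ 0} = #S ^ n := by
    exact_mod_cast (card_filter_add_card_filter_not _).trans (by simp)
  have hzeros : (#{y : Fin n → S | eval (fun i ↦ (y i : F)) f = 0} : ℝ) ≤ d / #S * #S ^ n := by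
    rw [card_filter_univ_pi_subtype S fun x ↦ eval x f = 0]
    refine (card_zeros_le_totalDegree_div_mul hf S).trans ?_
    gcongr
  linarith

/-- Schwartz–Zippel: if `f` is a nonzero polynomial of total degree at most
`d` over a field `F` and `S ⊆ F` is a finite nonempty set, then for
`y₁, …, yₙ` chosen independently and uniformly from `S`,
`Pr[f(y₁,…,yₙ) ≠ 0] ≥ 1 − d/|S|`; equivalently the number of tuples in `Sⁿ`
on which `f` does not vanish is at least `(1 − d/|S|)·|S|ⁿ`. -/
theorem stmt14 {F : Type*} [Field F] [DecidableEq F] {n d : ℕ}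
    (f : MvPolynomial (Fin n) F) (hf : f ≠ 0) (hd : f.totalDegree ≤ d)
    (S : Finset F) (hS : S.Nonempty) :
    (1 - (d : ℝ) / S.card) * (S.card : ℝ) ^ n ≤
      ((Finset.univ.filter fun y : Fin n → ↥S =>
        MvPolynomial.eval (fun i => (y i : F)) f ≠ 0).card : ℝ) :=
  stmt14_general f hf hd S
end

section
/- For f : {0,1}^n → ℝ with Fourier coefficients f̂ and any prefix α ∈ {0,1}^r, the quantity F_α = E_{y,z ∈ {0,1}^r, x ∈ {0,1}^{n−r}}[f(yx)·f(zx)·χ_α(y)·χ_α(z)] equals Σ_{x ∈ {0,1}^{n−r}} f̂(αx)², where αx denotes the concatenation of α and x. In particular F_α = F_{α0} + F_{α1}. -/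
/-!
With `g_α(x) = ∑_y f(yx) χ_α(y)`, the quantity `F_α` is `∑_x g_α(x)²` and `f̂(αβ)` is the
Fourier coefficient of `g_α` at `β`, both up to powers of `2`; so the first identity is Parseval's
identity for `g_α` on `{0,1}^m`, which comes from the orthogonality of the characters. Since
`f̂(αβ)` does not depend on where the prefix ends, splitting the sum over `β ∈ {0,1}^{m+1}`
according to its first bit gives `F_α = F_{α0} + F_{α1}`.
-/

/-- The character `χ_α(y) = ∏ᵢ (−1)^{αᵢyᵢ}` on the Boolean cube. -/
def chi {r : ℕ} (α y : Fin r → Bool) : ℝ :=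
  ∏ i : Fin r, if α i && y i then (-1 : ℝ) else 1

/-- `F_α = E_{y,z ∈ {0,1}^r, x ∈ {0,1}^m}[f(yx)·f(zx)·χ_α(y)·χ_α(z)]`, where
`f : {0,1}^{r+m} → ℝ` is written as a function of the `r`-bit prefix and the
`m`-bit suffix. -/
noncomputable def Fcal {r m : ℕ} (f : (Fin r → Bool) → (Fin m → Bool) → ℝ)
    (α : Fin r → Bool) : ℝ :=
  (∑ y : Fin r → Bool, ∑ z : Fin r → Bool, ∑ x : Fin m → Bool,
      f y x * f z x * chi α y * chi α z) / (2 ^ r * 2 ^ r * 2 ^ m)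

/-- The Fourier coefficient `f̂(αβ)` of `f : {0,1}^{r+m} → ℝ` at the
concatenation of `α ∈ {0,1}^r` and `β ∈ {0,1}^m`. -/
noncomputable def fhat2 {r m : ℕ} (f : (Fin r → Bool) → (Fin m → Bool) → ℝ)
    (α : Fin r → Bool) (β : Fin m → Bool) : ℝ :=
  (∑ y : Fin r → Bool, ∑ x : Fin m → Bool, f y x * chi α y * chi β x) /
    (2 ^ r * 2 ^ m)

/-- Viewing `f : {0,1}^{r+1+m} → ℝ` with prefix length `r+1` instead of `r`:
move the first suffix bit into the prefix. -/
def extendPrefix {r m : ℕ} (f : (Fin r → Bool) → (Fin (m + 1) → Bool) → ℝ) :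
    (Fin (r + 1) → Bool) → (Fin m → Bool) → ℝ :=
  fun y x => f (fun i => y i.castSucc) (Fin.cons (y (Fin.last r)) x)

lemma sum_chi_mul_chi {m : ℕ} (x x' : Fin m → Bool) :
    ∑ β : Fin m → Bool, chi β x * chi β x' = if x = x' then (2 : ℝ) ^ m else 0 := by
  -- The sum over `β` factorises over the coordinates.
  have hbit : ∀ i : Fin m,
      ∑ b : Bool, (if b && x i then (-1 : ℝ) else 1) * (if b && x' i then (-1 : ℝ) else 1) =
        if x i = x' i then 2 else 0 := by
    intro i
    cases x i <;> cases x' i <;> norm_num [Fintype.sum_bool]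
  simp only [chi, ← Finset.prod_mul_distrib]
  rw [← Fintype.prod_sum (fun i b =>
    (if b && x i then (-1 : ℝ) else 1) * (if b && x' i then (-1 : ℝ) else 1))]
  simp only [hbit]
  split_ifs with h
  · simp [h]
  · obtain ⟨i, hi⟩ := Function.ne_iff.mp h
    exact Finset.prod_eq_zero (Finset.mem_univ i) (if_neg hi)

theorem sum_sq_sum_mul_chi {m : ℕ} (g : (Fin m → Bool) → ℝ) :
    ∑ β : Fin m → Bool, (∑ x, g x * chi β x) ^ 2 = 2 ^ m * ∑ x, g x ^ 2 := by
  calc ∑ β : Fin m → Bool, (∑ x, g x * chi β x) ^ 2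
      = ∑ β : Fin m → Bool, ∑ x, ∑ x', g x * g x' * (chi β x * chi β x') := by
        refine Finset.sum_congr rfl fun β _ => ?_
        rw [sq, Finset.sum_mul_sum]
        exact Finset.sum_congr rfl fun x _ => Finset.sum_congr rfl fun x' _ => by ring
    _ = ∑ x, ∑ x', g x * g x' * ∑ β : Fin m → Bool, chi β x * chi β x' := by
        simp only [Finset.mul_sum]
        rw [Finset.sum_comm]
        exact Finset.sum_congr rfl fun x _ => Finset.sum_comm
    _ = 2 ^ m * ∑ x, g x ^ 2 := by
        simp only [sum_chi_mul_chi, mul_ite, mul_zero, Finset.sum_ite_eq, Finset.mem_univ,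
          if_true, Finset.mul_sum]
        exact Finset.sum_congr rfl fun x _ => by ring

noncomputable def prefixTransform {r m : ℕ} (f : (Fin r → Bool) → (Fin m → Bool) → ℝ)
    (α : Fin r → Bool) (x : Fin m → Bool) : ℝ :=
  ∑ y, f y x * chi α y

lemma Fcal_eq_sum_prefixTransform_sq {r m : ℕ} (f : (Fin r → Bool) → (Fin m → Bool) → ℝ)
    (α : Fin r → Bool) :
    Fcal f α = (∑ x, prefixTransform f α x ^ 2) / (2 ^ r * 2 ^ r * 2 ^ m) := by
  rw [Fcal]
  congr 1
  simp only [prefixTransform, sq, Finset.sum_mul_sum]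
  rw [eq_comm, Finset.sum_comm]
  refine Finset.sum_congr rfl fun y _ => ?_
  rw [Finset.sum_comm]
  exact Finset.sum_congr rfl fun z _ => Finset.sum_congr rfl fun x _ => by ring

lemma fhat2_eq_sum_prefixTransform_mul_chi {r m : ℕ}
    (f : (Fin r → Bool) → (Fin m → Bool) → ℝ) (α : Fin r → Bool) (β : Fin m → Bool) :
    fhat2 f α β = (∑ x, prefixTransform f α x * chi β x) / (2 ^ r * 2 ^ m) := by
  simp only [fhat2, prefixTransform, Finset.sum_mul]
  rw [Finset.sum_comm]

theorem Fcal_eq_sum_fhat2_sq {r m : ℕ} (f : (Fin r → Bool) → (Fin m → Bool) → ℝ)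
    (α : Fin r → Bool) :
    Fcal f α = ∑ β : Fin m → Bool, fhat2 f α β ^ 2 := by
  simp only [Fcal_eq_sum_prefixTransform_sq, fhat2_eq_sum_prefixTransform_mul_chi, div_pow,
    ← Finset.sum_div, sum_sq_sum_mul_chi]
  field_simp

lemma Fin.sum_univ_pi_snoc {M β : Type*} [AddCommMonoid M] [Fintype β] {n : ℕ}
    (g : (Fin (n + 1) → β) → M) :
    ∑ y, g y = ∑ y : Fin n → β, ∑ c, g (Fin.snoc y c) := by
  rw [← (Fin.snocEquiv fun _ => β).sum_comp g, Fintype.sum_prod_type, Finset.sum_comm]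
  rfl

lemma Fin.sum_univ_pi_cons {M β : Type*} [AddCommMonoid M] [Fintype β] {n : ℕ}
    (g : (Fin (n + 1) → β) → M) :
    ∑ x, g x = ∑ c, ∑ x : Fin n → β, g (Fin.cons c x) := by
  rw [← (Fin.consEquiv fun _ => β).sum_comp g, Fintype.sum_prod_type]
  rfl

lemma chi_snoc {r : ℕ} (α y : Fin r → Bool) (b c : Bool) :
    chi (Fin.snoc α b) (Fin.snoc y c) = chi α y * if b && c then -1 else 1 := by
  simp [chi, Fin.prod_univ_castSucc]

lemma chi_cons {m : ℕ} (β x : Fin m → Bool) (b c : Bool) :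
    chi (Fin.cons b β) (Fin.cons c x) = (if b && c then -1 else 1) * chi β x := by
  simp [chi, Fin.prod_univ_succ]

lemma extendPrefix_snoc {r m : ℕ} (f : (Fin r → Bool) → (Fin (m + 1) → Bool) → ℝ)
    (y : Fin r → Bool) (c : Bool) (x : Fin m → Bool) :
    extendPrefix f (Fin.snoc y c) x = f y (Fin.cons c x) := by
  simp [extendPrefix]

lemma fhat2_extendPrefix_snoc {r m : ℕ} (f : (Fin r → Bool) → (Fin (m + 1) → Bool) → ℝ)
    (α : Fin r → Bool) (b : Bool) (β : Fin m → Bool) :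
    fhat2 (extendPrefix f) (Fin.snoc α b) β = fhat2 f α (Fin.cons b β) := by
  simp only [fhat2, Fin.sum_univ_pi_snoc, Fin.sum_univ_pi_cons (n := m), extendPrefix_snoc,
    chi_snoc, chi_cons]
  rw [show (2 : ℝ) ^ (r + 1) * 2 ^ m = 2 ^ r * 2 ^ (m + 1) by ring]
  congr 1
  refine Finset.sum_congr rfl fun y _ => Finset.sum_congr rfl fun c _ =>
    Finset.sum_congr rfl fun x _ => by ring

/-- `F_α = ∑_{x ∈ {0,1}^{n−r}} f̂(αx)²`; in particular
`F_α = F_{α0} + F_{α1}`. -/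
theorem stmt17 :
    (∀ (r m : ℕ) (f : (Fin r → Bool) → (Fin m → Bool) → ℝ) (α : Fin r → Bool),
      Fcal f α = ∑ β : Fin m → Bool, (fhat2 f α β) ^ 2) ∧
    (∀ (r m : ℕ) (f : (Fin r → Bool) → (Fin (m + 1) → Bool) → ℝ)
        (α : Fin r → Bool),
      Fcal f α = Fcal (extendPrefix f) (Fin.snoc α false) +
        Fcal (extendPrefix f) (Fin.snoc α true)) := by
  refine ⟨fun r m f α => Fcal_eq_sum_fhat2_sq f α, fun r m f α => ?_⟩
  simp only [Fcal_eq_sum_fhat2_sq, fhat2_extendPrefix_snoc]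
  rw [Fin.sum_univ_pi_cons, Fintype.sum_bool, add_comm]
end
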